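/- Let c, β be real numbers with c² < 1 and β < 2√(1−c²). Then there exists a constant C > 0 such that for every twice continuously differentiable function u : ℝ → ℝ with u, u', u'' square-integrable on ℝ and with u(x) → 0 and u'(x) → 0 as |x| → ∞, one has ∫_ℝ (u''(x))² dx − β∫_ℝ (u'(x))² dx + (1−c²)∫_ℝ u(x)² dx ≥ C ( ∫_ℝ (u''(x))² dx + ∫_ℝ (u'(x))² dx + ∫_ℝ u(x)² dx ). -/

import Mathlib

open MeasureTheory Filter

private lemma ibp_aux (u : ℝ → ℝ) (hu : ContDiff ℝ 2 u)
    (hI1 : Integrable (fun x => (deriv u x) ^ 2))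
    (hImul : Integrable (fun x => u x * deriv (deriv u) x))
    (h0 : Tendsto u (cocompact ℝ) (nhds 0))
    (h1 : Tendsto (deriv u) (cocompact ℝ) (nhds 0)) :
    (∫ x : ℝ, (deriv u x) ^ 2) = - ∫ x : ℝ, u x * deriv (deriv u) x := by
  have hsplit : Differentiable ℝ u ∧ ContDiff ℝ 1 (deriv u) := by
    rw [show (2 : WithTop ℕ∞) = 1 + 1 from rfl, contDiff_succ_iff_deriv] at hu
    exact ⟨hu.1, hu.2.2⟩
  obtain ⟨hud, hcd⟩ := hsplit
  have hud' : Differentiable ℝ (deriv u) := hcd.differentiable one_ne_zero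
  set G : ℝ → ℝ := fun x => (deriv u x) ^ 2 + u x * deriv (deriv u) x with hGdef
  have hF : ∀ x : ℝ, HasDerivAt (fun y => u y * deriv u y) (G x) x := by
    intro x
    have : HasDerivAt (fun y => u y * deriv u y) _ x := ((hud x).hasDerivAt).mul ((hud' x).hasDerivAt)
    simpa [hGdef, pow_two, mul_comm] using this
  have hGint : Integrable G := hI1.add hImul
  have hat : atTop ≤ cocompact ℝ := atTop_le_cocompact
  have hab : atBot ≤ cocompact ℝ := atBot_le_cocompact
  have hFtop : Tendsto (fun y => u y * deriv u y) atTop (nhds 0) := by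
    simpa using (h0.mono_left hat).mul (h1.mono_left hat)
  have hFbot : Tendsto (fun y => u y * deriv u y) atBot (nhds 0) := by
    simpa using (h0.mono_left hab).mul (h1.mono_left hab)
  have hIoi : ∫ x in Set.Ioi (0:ℝ), G x = 0 - u 0 * deriv u 0 :=
    integral_Ioi_of_hasDerivAt_of_tendsto' (fun x _ => hF x) hGint.integrableOn hFtop
  have hIic : ∫ x in Set.Iic (0:ℝ), G x = u 0 * deriv u 0 - 0 :=
    integral_Iic_of_hasDerivAt_of_tendsto' (fun x _ => hF x) hGint.integrableOn hFbot
  have htot : ∫ x : ℝ, G x = 0 := by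
    rw [← intervalIntegral.integral_Iic_add_Ioi hGint.integrableOn hGint.integrableOn, hIic, hIoi]; ring
  have hadd : ∫ x : ℝ, G x
      = (∫ x : ℝ, (deriv u x) ^ 2) + ∫ x : ℝ, u x * deriv (deriv u) x :=
    integral_add hI1 hImul
  linarith [hadd ▸ htot]

theorem I_coercive (c β : ℝ) (hc : c ^ 2 < 1) (hβ : β < 2 * Real.sqrt (1 - c ^ 2)) :
    ∃ C > (0 : ℝ), ∀ u : ℝ → ℝ, ContDiff ℝ 2 u →
      Integrable (fun x => (u x) ^ 2) →
      Integrable (fun x => (deriv u x) ^ 2) →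
      Integrable (fun x => (iteratedDeriv 2 u x) ^ 2) →
      Filter.Tendsto u (Filter.cocompact ℝ) (nhds 0) →
      Filter.Tendsto (deriv u) (Filter.cocompact ℝ) (nhds 0) →
      (∫ x : ℝ, (iteratedDeriv 2 u x) ^ 2) - β * (∫ x : ℝ, (deriv u x) ^ 2)
          + (1 - c ^ 2) * (∫ x : ℝ, (u x) ^ 2)
        ≥ C * ((∫ x : ℝ, (iteratedDeriv 2 u x) ^ 2) + (∫ x : ℝ, (deriv u x) ^ 2)
          + (∫ x : ℝ, (u x) ^ 2)) := by
  set s : ℝ := Real.sqrt (1 - c ^ 2) with hsdef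
  have hs : 0 < s := Real.sqrt_pos.2 (by linarith)
  have hs2 : s ^ 2 = 1 - c ^ 2 := Real.sq_sqrt (by linarith)
  set β' : ℝ := max β 0 with hβ'def
  have hββ' : β ≤ β' := le_max_left _ _
  have hβ'0 : 0 ≤ β' := le_max_right _ _
  have hβ's : β' < 2 * s := max_lt hβ (by positivity)
  set m : ℝ := min 1 (s ^ 2) with hmdef
  have hm : 0 < m := lt_min one_pos (by positivity)
  have hm1 : m ≤ 1 := min_le_left _ _
  have hms : m ≤ s ^ 2 := min_le_right _ _
  refine ⟨(2 * s - β') * m / (2 * s + m),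
    div_pos (mul_pos (by linarith) hm) (by positivity), ?_⟩
  intro u hu hiu hiu' hiu'' h0 h1
  have h2 : iteratedDeriv 2 u = deriv (deriv u) := by
    rw [iteratedDeriv_succ, iteratedDeriv_one]
  rw [h2] at hiu'' ⊢
  set A : ℝ := ∫ x : ℝ, (deriv (deriv u) x) ^ 2 with hAdef
  set B : ℝ := ∫ x : ℝ, (deriv u x) ^ 2 with hBdef
  set D : ℝ := ∫ x : ℝ, (u x) ^ 2 with hDdef
  have hA : 0 ≤ A := integral_nonneg fun x => sq_nonneg _
  have hB : 0 ≤ B := integral_nonneg fun x => sq_nonneg _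
  have hD : 0 ≤ D := integral_nonneg fun x => sq_nonneg _
  -- continuity
  have hsplit : Differentiable ℝ u ∧ ContDiff ℝ 1 (deriv u) := by
    have hu2 := hu
    rw [show (2 : WithTop ℕ∞) = 1 + 1 from rfl, contDiff_succ_iff_deriv] at hu2
    exact ⟨hu2.1, hu2.2.2⟩
  obtain ⟨hud, hcd⟩ := hsplit
  have hcu : Continuous u := hu.continuous
  have hcu'' : Continuous (deriv (deriv u)) := hcd.continuous_deriv le_rfl
  -- integrability of u * u''
  have hImul : Integrable (fun x => u x * deriv (deriv u) x) := by
    apply ((hiu.add hiu'').div_const 2).mono' ((hcu.mul hcu'').aestronglyMeasurable)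
    filter_upwards with x
    rw [Real.norm_eq_abs, Pi.mul_apply, abs_mul]
    simp only [Pi.add_apply]
    nlinarith [sq_nonneg (|u x| - |deriv (deriv u) x|), sq_abs (u x),
      sq_abs (deriv (deriv u) x), abs_nonneg (u x), abs_nonneg (deriv (deriv u) x)]
  have hIBP : B = - ∫ x : ℝ, u x * deriv (deriv u) x := ibp_aux u hu hiu' hImul h0 h1
  -- key quadratic inequality : 0 ≤ A - 2sB + s²D
  have hq : (0:ℝ) ≤ ∫ x : ℝ, (s * u x + deriv (deriv u) x) ^ 2 :=
    integral_nonneg fun x => sq_nonneg _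
  have hexp : (∫ x : ℝ, (s * u x + deriv (deriv u) x) ^ 2)
      = s ^ 2 * D + (2 * s * (∫ x : ℝ, u x * deriv (deriv u) x) + A) := by
    have heq : (fun x : ℝ => (s * u x + deriv (deriv u) x) ^ 2)
        = fun x : ℝ => s ^ 2 * (u x) ^ 2
          + (2 * s * (u x * deriv (deriv u) x) + (deriv (deriv u) x) ^ 2) := by
      funext x; ring
    have hg2 : Integrable (fun x : ℝ => 2 * s * (u x * deriv (deriv u) x)
        + (deriv (deriv u) x) ^ 2) := (hImul.const_mul _).add hiu''
    rw [heq, integral_add (hiu.const_mul _) hg2,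
      integral_add (hImul.const_mul _) hiu'', integral_const_mul, integral_const_mul]
  have hkey : 2 * s * B ≤ A + s ^ 2 * D := by
    rw [hexp] at hq
    have : (∫ x : ℝ, u x * deriv (deriv u) x) = -B := by linarith [hIBP]
    rw [this] at hq
    linarith
  -- arithmetic conclusion
  have hstep1 : 2 * s * m * (A + B + D) ≤ (2 * s + m) * (A + s ^ 2 * D) := by
    have t1 : m * (2 * s * B) ≤ m * (A + s ^ 2 * D) := mul_le_mul_of_nonneg_left hkey hm.le
    have t2 : 2 * s * m * A ≤ 2 * s * 1 * A :=
      mul_le_mul_of_nonneg_right (mul_le_mul_of_nonneg_left hm1 (by linarith)) hA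
    have t3 : 2 * s * m * D ≤ 2 * s * s ^ 2 * D :=
      mul_le_mul_of_nonneg_right (mul_le_mul_of_nonneg_left hms (by linarith)) hD
    nlinarith [t1, t2, t3]
  have hstep2 : (2 * s - β') * (A + s ^ 2 * D) ≤ 2 * s * (A - β' * B + s ^ 2 * D) := by
    have t1 : β' * (2 * s * B) ≤ β' * (A + s ^ 2 * D) := mul_le_mul_of_nonneg_left hkey hβ'0
    nlinarith [t1]
  have e1 := mul_le_mul_of_nonneg_left hstep1 (by linarith : (0:ℝ) ≤ 2 * s - β')
  have e2 := mul_le_mul_of_nonneg_left hstep2 (by positivity : (0:ℝ) ≤ 2 * s + m)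
  have hfin : (2 * s) * ((2 * s - β') * m / (2 * s + m) * (A + B + D) * (2 * s + m))
      ≤ (2 * s) * ((A - β' * B + s ^ 2 * D) * (2 * s + m)) := by
    have hCdef : (2 * s - β') * m / (2 * s + m) * (2 * s + m) = (2 * s - β') * m :=
      div_mul_cancel₀ _ (by positivity)
    rw [mul_right_comm ((2 * s - β') * m / (2 * s + m)), hCdef]
    linarith [e1, e2]
  have hfin2 : (2 * s - β') * m / (2 * s + m) * (A + B + D) ≤ A - β' * B + s ^ 2 * D := by
    have := le_of_mul_le_mul_left hfin (by positivity : (0:ℝ) < 2 * s)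
    exact le_of_mul_le_mul_right (by linarith [this]) (by positivity : (0:ℝ) < 2 * s + m)
  have hββB : β * B ≤ β' * B := mul_le_mul_of_nonneg_right hββ' hB
  have hsD : s ^ 2 * D = (1 - c ^ 2) * D := by rw [hs2]
  linarith [hfin2, hββB, hsD]
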